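/- arXiv:2405.14060 — 3 statements merged into one kernel-verified Lean document; each statement's English description precedes it below -/
import Mathlib

section
/- Pairwise decomposition of tensor network contraction: if 𝒯 = 𝒯₁ ⊔ 𝒯₂ is a partition of the input tensors with variable sets Λ₁ and Λ₂ respectively, and every variable in (Λ₁ ∩ Λ₂) ∪ V₀ is included in the intermediate output sets, then con(Λ, 𝒯, V₀) = con(Λ₁' ∪ Λ₂', {con(Λ₁, 𝒯₁, Λ₁'), con(Λ₂, 𝒯₂, Λ₂')}, V₀), where Λᵢ' = Λᵢ ∩ (Λ_{3−i} ∪ V₀). -/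
variable {ι : Type} [Fintype ι] [DecidableEq ι]
variable {D : ι → Type} [∀ i, Fintype (D i)] [∀ i, DecidableEq (D i)]

/-- Tensor network contraction `con(Λ, 𝒯, V₀)` over the variable set `Λ`: sums the
product of the tensors over all assignments of `Λ ∖ V₀`, the remaining coordinates
being fixed by `x`. -/
noncomputable def con (Λ : Finset ι) (𝒯 : List ((∀ i, D i) → ℝ)) (V₀ : Finset ι)
    (x : ∀ i, D i) : ℝ :=
  ∑ y : ∀ i, D i,
    if ∀ i, i ∉ Λ \ V₀ → y i = x i then (𝒯.map fun T => T y).prod else 0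

/-- A tensor `T` has scope (at most) `S` if it depends only on the coordinates in `S`. -/
def TensorDependsOn (T : (∀ i, D i) → ℝ) (S : Finset ι) : Prop :=
  ∀ x y : ∀ i, D i, (∀ i ∈ S, x i = y i) → T x = T y

/-
Both sides are iterated marginalizations of the product `P₁ P₂` of the two sub-networks. Split
the summed variables `(Λ₁ ∪ Λ₂) ∖ V₀` into the shared ones `(Λ₁ ∩ Λ₂) ∖ V₀` and the private ones
`Sᵢ = Λᵢ ∖ Λᵢ'`. Summing out `S₁ ∪ S₂` first, `S₂` avoids the scope of `P₁` and `S₁` avoids the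
scope of `P₂`, so the sum factors as `(∑_{S₁} P₁) (∑_{S₂} P₂)`, which is the product of the two
intermediate tensors.
-/

noncomputable def sumOut (S : Finset ι) (F : (∀ i, D i) → ℝ) (x : ∀ i, D i) : ℝ :=
  ∑ y : ∀ i, D i, if ∀ i, i ∉ S → y i = x i then F y else 0

theorem con_eq_sumOut (Λ V₀ : Finset ι) (𝒯 : List ((∀ i, D i) → ℝ)) :
    con Λ 𝒯 V₀ = sumOut (Λ \ V₀) fun y => (𝒯.map fun T => T y).prod :=
  rfl

theorem sumOut_union {S T : Finset ι} (hST : Disjoint S T) (F : (∀ i, D i) → ℝ)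
    (x : ∀ i, D i) :
    sumOut (S ∪ T) F x = sumOut S (sumOut T F) x := by
  simp only [sumOut, ← Finset.sum_filter]
  -- each `y` agreeing with `x` off `S ∪ T` comes from exactly one intermediate `z`:
  -- `x` on `T`, `y` elsewhere
  rw [Finset.sum_comm' (t' := Finset.univ.filter fun y => ∀ i, i ∉ S ∪ T → y i = x i)
    (s' := fun y => {fun i => if i ∈ T then x i else y i})]
  · simp only [Finset.sum_singleton]
  intro z y
  simp only [Finset.mem_filter, Finset.mem_univ, true_and, Finset.mem_singleton, funext_iff]
  grind [Finset.disjoint_left]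

theorem TensorDependsOn.list_prod {ι : Type} {D : ι → Type} {L : List ((∀ i, D i) → ℝ)}
    {A : Finset ι} (hL : ∀ T ∈ L, TensorDependsOn T A) :
    TensorDependsOn (fun y => (L.map fun T => T y).prod) A :=
  fun x y hxy => congrArg List.prod (List.map_congr_left fun T hT => hL T hT x y hxy)

theorem TensorDependsOn.sumOut {F : (∀ i, D i) → ℝ} {A : Finset ι} (hF : TensorDependsOn F A)
    (S : Finset ι) : TensorDependsOn (sumOut S F) (A \ S) := by
  intro x x' hxx'
  -- `σ` matches the assignments summed at `x` with those summed at `x'`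
  let σ : (∀ i, D i) → ∀ i, D i := fun y i =>
    if i ∈ S then y i else Equiv.swap (x i) (x' i) (y i)
  have hσ : σ.Involutive := fun y => funext fun i => by by_cases hi : i ∈ S <;> simp [σ, hi]
  refine Fintype.sum_bijective σ hσ.bijective _ _ fun y => ?_
  have hagree : (∀ i, i ∉ S → y i = x i) ↔ (∀ i, i ∉ S → σ y i = x' i) :=
    forall₂_congr fun i hi => by simp [σ, hi, Equiv.swap_apply_eq_iff]
  by_cases hy : ∀ i, i ∉ S → y i = x i
  · rw [if_pos hy, if_pos (hagree.mp hy)]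
    refine hF _ _ fun i hi => ?_
    by_cases hiS : i ∈ S
    · simp [σ, hiS]
    · simp [σ, hiS, hy i hiS, hxx' i (Finset.mem_sdiff.mpr ⟨hi, hiS⟩)]
  · rw [if_neg hy, if_neg (mt hagree.mpr hy)]

theorem sumOut_mul_of_dependsOn {S A : Finset ι} (hSA : Disjoint S A) (F : (∀ i, D i) → ℝ)
    {G : (∀ i, D i) → ℝ} (hG : TensorDependsOn G A) (x : ∀ i, D i) :
    sumOut S (fun y => F y * G y) x = sumOut S F x * G x := by
  rw [sumOut, sumOut, Finset.sum_mul]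
  refine Finset.sum_congr rfl fun y _ => ?_
  split_ifs with hy
  · rw [hG y x fun i hi => hy i (Finset.disjoint_right.mp hSA hi)]
  · rw [zero_mul]

theorem mul_sumOut_of_dependsOn {S A : Finset ι} (hSA : Disjoint S A) (F : (∀ i, D i) → ℝ)
    {G : (∀ i, D i) → ℝ} (hG : TensorDependsOn G A) (x : ∀ i, D i) :
    sumOut S (fun y => G y * F y) x = G x * sumOut S F x := by
  simpa only [mul_comm] using sumOut_mul_of_dependsOn hSA F hG x

theorem sumOut_union_mul {S₁ S₂ A₁ A₂ : Finset ι} (h₁₂ : Disjoint S₁ S₂)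
    (h₁ : Disjoint S₁ A₂) (h₂ : Disjoint S₂ A₁) {F₁ F₂ : (∀ i, D i) → ℝ}
    (hF₁ : TensorDependsOn F₁ A₁) (hF₂ : TensorDependsOn F₂ A₂) (x : ∀ i, D i) :
    sumOut (S₁ ∪ S₂) (fun y => F₁ y * F₂ y) x = sumOut S₁ F₁ x * sumOut S₂ F₂ x := by
  rw [sumOut_union h₁₂]
  simp_rw [funext (mul_sumOut_of_dependsOn h₂ F₂ hF₁)]
  exact sumOut_mul_of_dependsOn (h₁.mono_right Finset.sdiff_subset) F₁ (hF₂.sumOut S₂) x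

theorem con_pairwise_decomposition_general (Λ₁ Λ₂ V₀ : Finset ι)
    (𝒯₁ 𝒯₂ : List ((∀ i, D i) → ℝ))
    (h₁ : ∀ T ∈ 𝒯₁, TensorDependsOn T Λ₁) (h₂ : ∀ T ∈ 𝒯₂, TensorDependsOn T Λ₂)
    (x : ∀ i, D i) :
    con (Λ₁ ∪ Λ₂) (𝒯₁ ++ 𝒯₂) V₀ x =
      con ((Λ₁ ∩ (Λ₂ ∪ V₀)) ∪ (Λ₂ ∩ (Λ₁ ∪ V₀)))
        [con Λ₁ 𝒯₁ (Λ₁ ∩ (Λ₂ ∪ V₀)), con Λ₂ 𝒯₂ (Λ₂ ∩ (Λ₁ ∪ V₀))] V₀ x := by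
  set S₁ := Λ₁ \ (Λ₁ ∩ (Λ₂ ∪ V₀))
  set S₂ := Λ₂ \ (Λ₂ ∩ (Λ₁ ∪ V₀))
  have hsplit : (Λ₁ ∪ Λ₂) \ V₀ = ((Λ₁ ∩ (Λ₂ ∪ V₀)) ∪ (Λ₂ ∩ (Λ₁ ∪ V₀))) \ V₀ ∪ (S₁ ∪ S₂) := by
    grind
  have hshared : Disjoint (((Λ₁ ∩ (Λ₂ ∪ V₀)) ∪ (Λ₂ ∩ (Λ₁ ∪ V₀))) \ V₀) (S₁ ∪ S₂) := by
    grind [Finset.disjoint_left]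
  have h₁₂ : Disjoint S₁ S₂ := by grind [Finset.disjoint_left]
  have hS₁ : Disjoint S₁ Λ₂ := by grind [Finset.disjoint_left]
  have hS₂ : Disjoint S₂ Λ₁ := by grind [Finset.disjoint_left]
  simp only [con_eq_sumOut, List.map_append, List.prod_append, List.map_cons, List.map_nil,
    List.prod_cons, List.prod_nil, mul_one]
  rw [hsplit, sumOut_union hshared]
  congr 1
  funext z
  exact sumOut_union_mul h₁₂ hS₁ hS₂ (.list_prod h₁) (.list_prod h₂) z

/-- Pairwise decomposition: contracting the two sub-networks first, keeping the shared
and output variables open (Λᵢ' = Λᵢ ∩ (Λ_{3−i} ∪ V₀)), and then contracting the two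
resulting tensors, gives the same result as contracting the whole network at once. -/
theorem con_pairwise_decomposition (Λ₁ Λ₂ V₀ : Finset ι)
    (𝒯₁ 𝒯₂ : List ((∀ i, D i) → ℝ))
    (h₁ : ∀ T ∈ 𝒯₁, TensorDependsOn T Λ₁) (h₂ : ∀ T ∈ 𝒯₂, TensorDependsOn T Λ₂)
    (hV₀ : V₀ ⊆ Λ₁ ∪ Λ₂) (x : ∀ i, D i) :
    con (Λ₁ ∪ Λ₂) (𝒯₁ ++ 𝒯₂) V₀ x =
      con ((Λ₁ ∩ (Λ₂ ∪ V₀)) ∪ (Λ₂ ∩ (Λ₁ ∪ V₀)))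
        [con Λ₁ 𝒯₁ (Λ₁ ∩ (Λ₂ ∪ V₀)), con Λ₂ 𝒯₂ (Λ₂ ∩ (Λ₁ ∪ V₀))] V₀ x :=
  con_pairwise_decomposition_general Λ₁ Λ₂ V₀ 𝒯₁ 𝒯₂ h₁ h₂ x
end

section
/- The partition function of a sliced tensor network equals the total probability of the evidence: if p(Λ) is the (unnormalized) product of tensors in 𝒯 over finite domains, E ⊆ Λ, and e is an assignment of E, then con(Λ∖E, 𝒯_e, ∅) = Σ over assignments m of Λ∖E of Π_{T ∈ 𝒯} T evaluated at (e, m), where 𝒯_e is the set of tensors each sliced at E = e. -/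
/-!
STATEMENT 12: The partition function of the sliced tensor network equals the total
probability of the evidence:
  con(Λ∖E, 𝒯_e, ∅) = Σ_{m ∈ dom(Λ∖E)} Π_{T ∈ 𝒯} T(e, m).
-/

variable {ι : Type} [Fintype ι] [DecidableEq ι]
variable {D : ι → Type} [∀ i, Fintype (D i)] [∀ i, DecidableEq (D i)]

/-- Slicing a tensor at the evidence `E = e`: the variables in `E` are fixed to the
values given by `e`. -/
def sliceAt (E : Finset ι) (e : ∀ i, D i) (T : (∀ i, D i) → ℝ) : (∀ i, D i) → ℝ :=
  fun y => T fun i => if i ∈ E then e i else y i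

/-- The partition function of the sliced tensor network equals the total probability
of the evidence: `con(Λ∖E, 𝒯_e, ∅)` equals the sum, over assignments agreeing with the
evidence `e` on `E`, of the product of the original tensors. -/
theorem sliced_partition_function_eq_evidence_probability
    (E : Finset ι) (e : ∀ i, D i) (𝒯 : List ((∀ i, D i) → ℝ))
    (hnn : ∀ T ∈ 𝒯, ∀ y, 0 ≤ T y) (x : ∀ i, D i) :
    con (Finset.univ \ E) (𝒯.map (sliceAt E e)) (∅ : Finset ι) x =
      ∑ y : ∀ i, D i,
        if ∀ i ∈ E, y i = e i then (𝒯.map fun T => T y).prod else 0 := by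
  unfold con
  rw [← Finset.sum_filter, ← Finset.sum_filter]
  refine Finset.sum_nbij' (fun y => fun i => if i ∈ E then e i else y i)
    (fun z => fun i => if i ∈ E then x i else z i) ?_ ?_ ?_ ?_ ?_
  · intro y hy
    simp only [Finset.mem_filter, Finset.mem_univ, true_and]
    intro i hi
    simp [hi]
  · intro z hz
    simp only [Finset.mem_filter, Finset.mem_univ, true_and] at hz ⊢
    intro i
    simp only [Finset.sdiff_empty, Finset.mem_sdiff, Finset.mem_univ, true_and, not_not]
    intro hi
    simp [hi]
  · intro y hy
    simp only [Finset.mem_filter, Finset.mem_univ, true_and] at hy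
    funext i
    by_cases hi : i ∈ E
    · simp only [hi, if_pos]
      exact (hy i (by simp [Finset.mem_sdiff, hi])).symm
    · simp [hi]
  · intro z hz
    simp only [Finset.mem_filter, Finset.mem_univ, true_and] at hz
    funext i
    by_cases hi : i ∈ E
    · simp only [hi, if_pos]
      exact (hz i hi).symm
    · simp [hi]
  · intro y hy
    simp only [List.map_map]
    rfl
end

section
/- Marginal probability via two contractions: with evidence e on E and query set Q ⊆ Λ∖E, the conditional distribution p(Q | E = e) equals con(Λ∖E, 𝒯_e, Q) divided entrywise by the scalar con(Λ∖E, 𝒯_e, ∅), provided the latter is positive, where p(Λ) = Π_{T∈𝒯} T is the unnormalized joint distribution. -/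
/-!
STATEMENT 13: Marginal probability via two contractions: with evidence e on E and
query set Q ⊆ Λ∖E,
  p(Q | E = e) = con(Λ∖E, 𝒯_e, Q) / con(Λ∖E, 𝒯_e, ∅),
provided the denominator (the partition function p(e)) is positive, where
p(q|e) = p(q,e)/p(e) for the unnormalized joint p = Π_{T∈𝒯} T.
Here a full assignment `x` encodes both the query assignment (its Q-coordinates) and
the evidence (its E-coordinates).
-/

variable {ι : Type} [Fintype ι] [DecidableEq ι]
variable {D : ι → Type} [∀ i, Fintype (D i)] [∀ i, DecidableEq (D i)]

/-- Marginal probability via two contractions: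
`p(q | e) = p(q, e)/p(e) = con(Λ∖E, 𝒯_e, Q)(q) / con(Λ∖E, 𝒯_e, ∅)`. -/
theorem marginal_probability_via_contractions (E Q : Finset ι) (hdisj : Disjoint Q E)
    (𝒯 : List ((∀ i, D i) → ℝ)) (hnn : ∀ T ∈ 𝒯, ∀ y, 0 ≤ T y) (x : ∀ i, D i)
    (hpos : 0 < con (Finset.univ \ E) (𝒯.map (sliceAt E x)) (∅ : Finset ι) x) :
    -- p(q, e) / p(e) :
    (∑ y : ∀ i, D i,
        if ∀ i ∈ Q ∪ E, y i = x i then (𝒯.map fun T => T y).prod else 0) /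
      (∑ y : ∀ i, D i,
        if ∀ i ∈ E, y i = x i then (𝒯.map fun T => T y).prod else 0) =
    con (Finset.univ \ E) (𝒯.map (sliceAt E x)) Q x /
      con (Finset.univ \ E) (𝒯.map (sliceAt E x)) (∅ : Finset ι) x := by
  have key : ∀ V₀ : Finset ι,
      con (Finset.univ \ E) (𝒯.map (sliceAt E x)) V₀ x =
      ∑ y : ∀ i, D i,
        if ∀ i ∈ V₀ ∪ E, y i = x i then (𝒯.map fun T => T y).prod else 0 := by
    intro V₀
    unfold con
    refine Finset.sum_congr rfl fun y _ => ?_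
    have hcond : (∀ i, i ∉ (Finset.univ \ E) \ V₀ → y i = x i) ↔
        (∀ i ∈ V₀ ∪ E, y i = x i) := by
      constructor
      · intro h i hi
        apply h
        simp only [Finset.mem_sdiff, Finset.mem_univ, true_and, not_and, not_not]
        rcases Finset.mem_union.mp hi with h' | h'
        · intro _; exact h'
        · intro h''; exact absurd h' h''
      · intro h i hi
        simp only [Finset.mem_sdiff, Finset.mem_univ, true_and, not_and, not_not] at hi
        by_cases hE : i ∈ E
        · exact h i (Finset.mem_union_right _ hE)
        · exact h i (Finset.mem_union_left _ (hi hE))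
    rw [if_congr hcond rfl rfl]
    by_cases hc : ∀ i ∈ V₀ ∪ E, y i = x i
    · rw [if_pos hc, if_pos hc]
      congr 1
      rw [List.map_map]
      refine List.map_congr_left fun T _ => ?_
      show sliceAt E x T y = T y
      unfold sliceAt
      congr 1
      funext i
      by_cases hE : i ∈ E
      · simp [hE, hc i (Finset.mem_union_right _ hE)]
      · simp [hE]
    · rw [if_neg hc, if_neg hc]
  rw [key Q, key ∅]
  congr 1
  · refine Finset.sum_congr rfl fun y _ => ?_
    congr 1
    simp
end
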